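/- arXiv:1307.3369 — 2 statements merged into one kernel-verified Lean document; each statement's English description precedes it below -/
import Mathlib

section
/- Under the strong margin assumption (there exists t₀ > 0 with Lebesgue measure Q{x ∈ K : |f(x) − g(x)| ≤ t₀} = 0), the pseudo-distances d_Δ and d_{f,g} are equivalent: t₀ · d_Δ(G, G') ≤ 2·d_{f,g}(G, G') ≤ 2·(‖f‖_∞ + ‖g‖_∞) · d_Δ(G, G') for all measurable G, G' ⊆ K, where d_{f,g}(G,G') = ∫_K |f−g| 1_{GΔG'} dQ and d_Δ(G,G') = Q(G Δ G'). -/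
open MeasureTheory Set
open scoped symmDiff

/-! The weight `|f - g|` lies between `t₀` (almost everywhere on `K`, by the margin assumption)
and `Mf + Mg`, so its integral over `G ∆ G' ⊆ K` lies between `t₀` and `Mf + Mg` times the
measure of `G ∆ G'`; compactness of `K` makes that measure finite. -/

section SetIntegral

variable {α : Type*} [MeasurableSpace α] {μ : Measure α} {s K : Set α} {f : α → ℝ}
  {c : ℝ}

theorem setIntegral_mul_indicator_one (hs : MeasurableSet s) (hsK : s ⊆ K) (f : α → ℝ) :
    ∫ x in K, f x * s.indicator 1 x ∂μ = ∫ x in s, f x ∂μ := by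
  simp_rw [← indicator_mul_right, Pi.one_apply, mul_one]
  rw [setIntegral_indicator hs, inter_eq_self_of_subset_right hsK]

theorem ae_restrict_not_of_measure_sep_eq_zero {p : α → Prop} (hs : MeasurableSet s)
    (hsK : s ⊆ K) (h : μ {x ∈ K | p x} = 0) : ∀ᵐ x ∂μ.restrict s, ¬ p x := by
  rw [ae_iff, Measure.restrict_apply' hs]
  simp only [not_not]
  exact measure_mono_null (fun _ hx => ⟨hsK hx.2, hx.1⟩ : {x | p x} ∩ s ⊆ {x ∈ K | p x}) h

theorem mul_measureReal_le_setIntegral_of_ae_le (hμs : μ s ≠ ⊤) (hf : IntegrableOn f s μ)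
    (hc : ∀ᵐ x ∂μ.restrict s, c ≤ f x) : c * μ.real s ≤ ∫ x in s, f x ∂μ := by
  rw [mul_comm, ← smul_eq_mul, ← setIntegral_const]
  exact setIntegral_mono_ae_restrict (integrableOn_const hμs) hf hc

theorem setIntegral_le_mul_measureReal_of_ae_le (hμs : μ s ≠ ⊤) (hf : IntegrableOn f s μ)
    (hc : ∀ᵐ x ∂μ.restrict s, f x ≤ c) : ∫ x in s, f x ∂μ ≤ c * μ.real s := by
  rw [mul_comm, ← smul_eq_mul, ← setIntegral_const]
  exact setIntegral_mono_ae_restrict hf (integrableOn_const hμs) hc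

end SetIntegral

theorem strong_margin_equivalence_general {d : ℕ} (K : Set (Fin d → ℝ)) (hK : IsCompact K)
    (f g : (Fin d → ℝ) → ℝ) (hfm : Measurable f) (hgm : Measurable g)
    (Mf Mg : ℝ) (hf : ∀ x, |f x| ≤ Mf) (hg : ∀ x, |g x| ≤ Mg)
    (t₀ : ℝ)
    (hmargin : volume {x ∈ K | |f x - g x| ≤ t₀} = 0)
    (G G' : Set (Fin d → ℝ)) (hG : MeasurableSet G) (hG' : MeasurableSet G')
    (hGK : G ⊆ K) (hG'K : G' ⊆ K) :
    t₀ * (volume (G ∆ G')).toReal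
        ≤ 2 * ∫ x in K, |f x - g x| * (G ∆ G').indicator 1 x ∧
      2 * ∫ x in K, |f x - g x| * (G ∆ G').indicator 1 x
        ≤ 2 * (Mf + Mg) * (volume (G ∆ G')).toReal := by
  set S := G ∆ G'
  have hS : MeasurableSet S := hG.symmDiff hG'
  have hSK : S ⊆ K := symmDiff_subset_union.trans (union_subset hGK hG'K)
  have hSfin : volume S ≠ ⊤ := measure_ne_top_of_subset hSK hK.measure_lt_top.ne
  have hbound : ∀ x, |f x - g x| ≤ Mf + Mg := fun x =>
    (abs_sub _ _).trans (add_le_add (hf x) (hg x))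
  have hint : IntegrableOn (fun x => |f x - g x|) S volume :=
    Measure.integrableOn_of_bounded hSfin (hfm.sub hgm).abs.aestronglyMeasurable
      (ae_of_all _ fun x => by simpa only [Real.norm_eq_abs, abs_abs] using hbound x)
  have hsep : ∀ᵐ x ∂volume.restrict S, t₀ ≤ |f x - g x| :=
    (ae_restrict_not_of_measure_sep_eq_zero hS hSK hmargin).mono fun _ hx => (not_le.mp hx).le
  have hlower := mul_measureReal_le_setIntegral_of_ae_le hSfin hint hsep
  have hupper := setIntegral_le_mul_measureReal_of_ae_le hSfin hint (ae_of_all _ hbound)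
  have hnonneg : 0 ≤ ∫ x in S, |f x - g x| := setIntegral_nonneg hS fun _ _ => abs_nonneg _
  rw [setIntegral_mul_indicator_one hS hSK, ← measureReal_def]
  constructor <;> linarith

theorem strong_margin_equivalence {d : ℕ} (K : Set (Fin d → ℝ)) (hK : IsCompact K)
    (f g : (Fin d → ℝ) → ℝ) (hfm : Measurable f) (hgm : Measurable g)
    (Mf Mg : ℝ) (hf : ∀ x, |f x| ≤ Mf) (hg : ∀ x, |g x| ≤ Mg)
    (t₀ : ℝ) (ht₀ : 0 < t₀)
    (hmargin : volume {x ∈ K | |f x - g x| ≤ t₀} = 0)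
    (G G' : Set (Fin d → ℝ)) (hG : MeasurableSet G) (hG' : MeasurableSet G')
    (hGK : G ⊆ K) (hG'K : G' ⊆ K) :
    t₀ * (volume (G ∆ G')).toReal
        ≤ 2 * ∫ x in K, |f x - g x| * (G ∆ G').indicator 1 x ∧
      2 * ∫ x in K, |f x - g x| * (G ∆ G').indicator 1 x
        ≤ 2 * (Mf + Mg) * (volume (G ∆ G')).toReal :=
  strong_margin_equivalence_general K hK f g hfm hgm Mf Mg hf hg t₀ hmargin G G' hG hG' hGK hG'K
end

section
/- Let b, b' : [0,1] → [0,1] be measurable and G_b, G_{b'} the associated boundary fragments. If f, g are measurable functions on [0,1]² with ‖f‖_∞ ∨ ‖g‖_∞ ≤ c₁, then |R(G_b) − R(G_{b'})| ≤ c₁ ∫₀¹ |b − b'| dx₁, where R(G) = (1/2)(∫_{[0,1]²∖G} f + ∫_G g). -/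
/-!
`R(G_b) - R(G_{b'})` is half the difference of the integrals of `g - f` over `G_b` and
`G_{b'}`, so it only sees the symmetric difference `G_b ∆ G_{b'}`, where `|g - f| ≤ 2 c₁`.
By Fubini, the area of `G_b ∆ G_{b'}` is `∫₀¹ |b - b'|`, since above each `x₁` it is the
interval between `b x₁` and `b' x₁`.
-/

open MeasureTheory Set
open scoped symmDiff

theorem Real.volume_Icc_symmDiff_Icc {c a a' : ℝ} (ha : c ≤ a) (ha' : c ≤ a') :
    volume (Icc c a ∆ Icc c a') = ENNReal.ofReal |a - a'| := by
  wlog h : a ≤ a' generalizing a a'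
  · rw [symmDiff_comm, abs_sub_comm]
    exact this ha' ha (le_of_not_ge h)
  rw [symmDiff_of_le (Icc_subset_Icc_right h),
    measure_sdiff (Icc_subset_Icc_right h) measurableSet_Icc.nullMeasurableSet
      measure_Icc_lt_top.ne,
    Real.volume_Icc, Real.volume_Icc, ← ENNReal.ofReal_sub _ (sub_nonneg.2 ha),
    abs_of_nonpos (sub_nonpos.2 h)]
  ring_nf

section Risk

variable {α : Type*} [MeasurableSpace α] {μ : Measure α}

theorem norm_setIntegral_sub_setIntegral_le {E : Type*} [NormedAddCommGroup E]
    [NormedSpace ℝ E] {h : α → E} {s t : Set α} {C : ℝ}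
    (hs : MeasurableSet s) (ht : MeasurableSet t) (hμs : μ s ≠ ⊤) (hμt : μ t ≠ ⊤)
    (hhs : IntegrableOn h s μ) (hht : IntegrableOn h t μ) (hC : ∀ x, ‖h x‖ ≤ C) :
    ‖∫ x in s, h x ∂μ - ∫ x in t, h x ∂μ‖ ≤ C * μ.real (s ∆ t) := by
  have hbound : ∀ u, μ u ≠ ⊤ → ‖∫ x in u, h x ∂μ‖ ≤ C * μ.real u := fun u hu =>
    norm_setIntegral_le_of_norm_le_const hu.lt_top fun x _ => hC x
  calc ‖∫ x in s, h x ∂μ - ∫ x in t, h x ∂μ‖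
      = ‖∫ x in s \ t, h x ∂μ - ∫ x in t \ s, h x ∂μ‖ := by
        rw [← integral_inter_add_sdiff ht hhs, ← integral_inter_add_sdiff hs hht, inter_comm,
          add_sub_add_left_eq_sub]
    _ ≤ ‖∫ x in s \ t, h x ∂μ‖ + ‖∫ x in t \ s, h x ∂μ‖ := norm_sub_le _ _
    _ ≤ C * μ.real (s \ t) + C * μ.real (t \ s) :=
        add_le_add (hbound _ (measure_ne_top_of_subset sdiff_subset hμs))
          (hbound _ (measure_ne_top_of_subset sdiff_subset hμt))
    _ = C * μ.real (s ∆ t) := by rw [measureReal_symmDiff_eq hs ht hμs hμt, mul_add]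

noncomputable def risk (μ : Measure α) (Q : Set α) (f g : α → ℝ) (G : Set α) : ℝ :=
  1 / 2 * (∫ x in Q \ G, f x ∂μ) + 1 / 2 * ∫ x in G, g x ∂μ

variable {Q G G' : Set α} {f g : α → ℝ}

theorem risk_sub_risk (hf : IntegrableOn f Q μ) (hg : IntegrableOn g Q μ)
    (hG : MeasurableSet G) (hG' : MeasurableSet G') (hGQ : G ⊆ Q) (hG'Q : G' ⊆ Q) :
    risk μ Q f g G - risk μ Q f g G' =
      1 / 2 * (∫ x in G, g x - f x ∂μ - ∫ x in G', g x - f x ∂μ) := by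
  simp only [risk]
  rw [setIntegral_sdiff hG hf hGQ, setIntegral_sdiff hG' hf hG'Q,
    integral_sub (hg.mono_set hGQ) (hf.mono_set hGQ),
    integral_sub (hg.mono_set hG'Q) (hf.mono_set hG'Q)]
  ring

theorem abs_risk_sub_risk_le {c : ℝ} (hQ : μ Q ≠ ⊤) (hf : IntegrableOn f Q μ)
    (hg : IntegrableOn g Q μ) (hfc : ∀ x, |f x| ≤ c) (hgc : ∀ x, |g x| ≤ c)
    (hG : MeasurableSet G) (hG' : MeasurableSet G') (hGQ : G ⊆ Q) (hG'Q : G' ⊆ Q) :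
    |risk μ Q f g G - risk μ Q f g G'| ≤ c * μ.real (G ∆ G') := by
  have hgf : ∀ x, ‖g x - f x‖ ≤ 2 * c := fun x => (norm_sub_le _ _).trans <| by
    simp only [Real.norm_eq_abs]; linarith [hfc x, hgc x]
  have hdiff := norm_setIntegral_sub_setIntegral_le (h := fun x => g x - f x) hG hG'
    (measure_ne_top_of_subset hGQ hQ) (measure_ne_top_of_subset hG'Q hQ)
    ((hg.sub hf).mono_set hGQ) ((hg.sub hf).mono_set hG'Q) hgf
  rw [Real.norm_eq_abs] at hdiff
  rw [risk_sub_risk hf hg hG hG' hGQ hG'Q, abs_mul, abs_of_pos one_half_pos]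
  linarith

end Risk

/-- The boundary fragment `G_b` is `regionUnder b (Icc 0 1)`. -/
def regionUnder {α : Type*} (b : α → ℝ) (s : Set α) : Set (α × ℝ) :=
  {p | p.1 ∈ s ∧ p.2 ∈ Icc 0 (b p.1)}

section RegionUnder

variable {α : Type*} {b b' : α → ℝ} {s : Set α}

theorem regionUnder_subset_prod (hb : ∀ x ∈ s, b x ≤ 1) :
    regionUnder b s ⊆ s ×ˢ Icc 0 1 :=
  fun _ ⟨hx, hy⟩ => ⟨hx, hy.1, hy.2.trans (hb _ hx)⟩

theorem preimage_mk_regionUnder (b : α → ℝ) (s : Set α) (x : α) [Decidable (x ∈ s)] :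
    Prod.mk x ⁻¹' regionUnder b s = if x ∈ s then Icc 0 (b x) else ∅ := by
  split_ifs with hx <;> ext y <;> simp [regionUnder, hx]

variable [MeasurableSpace α] {μ : Measure α}

theorem measurableSet_regionUnder (hb : Measurable b) (hs : MeasurableSet s) :
    MeasurableSet (regionUnder b s) :=
  measurableSet_region_between_cc measurable_const hb hs

theorem prod_volume_regionUnder_symmDiff [SFinite μ] (hb : Measurable b) (hb' : Measurable b')
    (hs : MeasurableSet s) (hb0 : ∀ x ∈ s, 0 ≤ b x) (hb'0 : ∀ x ∈ s, 0 ≤ b' x) :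
    μ.prod volume (regionUnder b s ∆ regionUnder b' s) =
      ∫⁻ x in s, ENNReal.ofReal |b x - b' x| ∂μ := by
  classical
  rw [Measure.prod_apply ((measurableSet_regionUnder hb hs).symmDiff
    (measurableSet_regionUnder hb' hs)), ← lintegral_indicator hs]
  congr 1 with x
  by_cases hx : x ∈ s
  · simp [preimage_symmDiff, preimage_mk_regionUnder, hx,
      Real.volume_Icc_symmDiff_Icc (hb0 x hx) (hb'0 x hx)]
  · simp [preimage_symmDiff, preimage_mk_regionUnder, hx]

theorem prod_measureReal_regionUnder_symmDiff [SFinite μ] (hb : Measurable b)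
    (hb' : Measurable b') (hs : MeasurableSet s) (hb0 : ∀ x ∈ s, 0 ≤ b x)
    (hb'0 : ∀ x ∈ s, 0 ≤ b' x) :
    (μ.prod volume).real (regionUnder b s ∆ regionUnder b' s) = ∫ x in s, |b x - b' x| ∂μ := by
  rw [Measure.real, prod_volume_regionUnder_symmDiff hb hb' hs hb0 hb'0]
  exact (integral_eq_lintegral_of_nonneg_ae (ae_of_all _ fun _ => abs_nonneg _)
    (hb.sub hb').abs.aestronglyMeasurable).symm

end RegionUnder

theorem risk_lipschitz_in_boundary (b b' : ℝ → ℝ)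
    (hb : Measurable b) (hb' : Measurable b')
    (hbr : ∀ x ∈ Icc (0:ℝ) 1, b x ∈ Icc (0:ℝ) 1)
    (hb'r : ∀ x ∈ Icc (0:ℝ) 1, b' x ∈ Icc (0:ℝ) 1)
    (f g : ℝ × ℝ → ℝ) (hf : Measurable f) (hg : Measurable g)
    (c₁ : ℝ) (hfb : ∀ x, |f x| ≤ c₁) (hgb : ∀ x, |g x| ≤ c₁) :
    |((1 : ℝ) / 2 * (∫ x in (Icc (0:ℝ) 1 ×ˢ Icc (0:ℝ) 1) \
            {p : ℝ × ℝ | p.1 ∈ Icc (0:ℝ) 1 ∧ p.2 ∈ Icc 0 (b p.1)}, f x)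
        + 1 / 2 * ∫ x in {p : ℝ × ℝ | p.1 ∈ Icc (0:ℝ) 1 ∧ p.2 ∈ Icc 0 (b p.1)}, g x)
      - (1 / 2 * (∫ x in (Icc (0:ℝ) 1 ×ˢ Icc (0:ℝ) 1) \
            {p : ℝ × ℝ | p.1 ∈ Icc (0:ℝ) 1 ∧ p.2 ∈ Icc 0 (b' p.1)}, f x)
        + 1 / 2 * ∫ x in {p : ℝ × ℝ | p.1 ∈ Icc (0:ℝ) 1 ∧ p.2 ∈ Icc 0 (b' p.1)}, g x)|
      ≤ c₁ * ∫ x in Icc (0:ℝ) 1, |b x - b' x| := by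
  have hsquare : volume (Icc (0:ℝ) 1 ×ˢ Icc (0:ℝ) 1) ≠ ⊤ :=
    (isCompact_Icc.prod isCompact_Icc).measure_lt_top.ne
  have hbounded {φ : ℝ × ℝ → ℝ} (hφ : Measurable φ) (hφc : ∀ x, |φ x| ≤ c₁) :
      IntegrableOn φ (Icc 0 1 ×ˢ Icc 0 1) :=
    Measure.integrableOn_of_bounded hsquare hφ.aestronglyMeasurable (ae_of_all _ hφc)
  have hrisk := abs_risk_sub_risk_le hsquare (hbounded hf hfb) (hbounded hg hgb) hfb hgb
    (measurableSet_regionUnder hb measurableSet_Icc)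
    (measurableSet_regionUnder hb' measurableSet_Icc)
    (regionUnder_subset_prod fun x hx => (hbr x hx).2)
    (regionUnder_subset_prod fun x hx => (hb'r x hx).2)
  rwa [Measure.volume_eq_prod, prod_measureReal_regionUnder_symmDiff hb hb' measurableSet_Icc
    (fun x hx => (hbr x hx).1) (fun x hx => (hb'r x hx).1)] at hrisk
end
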